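/- arXiv:1801.04750 — 3 statements merged into one kernel-verified Lean document; each statement's English description precedes it below -/
import Mathlib

section
/- Let (T,d) be a compact ℝ-tree and let ε > 0. Then every collection of pairwise disjoint arcs of length ε in T is finite; that is, if E is a set of pairwise disjoint subsets of T, each of which is the image of an isometric embedding of the real interval [0,ε] into T, then E is a finite set. -/
/-!
By compactness, `T × T` is covered by finitely many balls of radius `ε / 4`, so among infinitely
many arcs there would be two, `[a, b]` and `[a', b']`, with `d(a, a') < ε / 2` and
`d(b, b') < ε / 2`. In an ℝ-tree the segment `[x, y]` lies in `[x, z] ∪ [z, y]` for every `z`,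
because the union contains a topological arc from `x` to `y` and arcs are unique. Hence
`[a, b] ⊆ [a, a'] ∪ [a', b'] ∪ [b', b]`, and the midpoint of `[a, b]` is too far from `a` and
from `b` to lie in the outer two segments, so the two arcs meet.
-/

open Set

/-- `A` is a topological arc from `x` to `y` in `T`: the image of a continuous injective
map from `[0,1]` sending `0` to `x` and `1` to `y`. -/
def IsTopArc {T : Type*} [MetricSpace T] (A : Set T) (x y : T) : Prop :=
  ∃ f : ℝ → T, ContinuousOn f (Icc 0 1) ∧ InjOn f (Icc 0 1) ∧
    f 0 = x ∧ f 1 = y ∧ f '' Icc 0 1 = A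

/-- `A` is a segment from `x` to `y` in `T`: the image of an isometric embedding of the
real interval `[0, dist x y]` sending the endpoints to `x` and `y`. -/
def IsSegment {T : Type*} [MetricSpace T] (A : Set T) (x y : T) : Prop :=
  ∃ f : ℝ → T,
    (∀ s ∈ Icc (0 : ℝ) (dist x y), ∀ t ∈ Icc (0 : ℝ) (dist x y),
      dist (f s) (f t) = |s - t|) ∧
    f 0 = x ∧ f (dist x y) = y ∧ f '' Icc 0 (dist x y) = A

/-- A metric space `T` is an ℝ-tree if any two points are joined by a segment (an
isometric copy of `[0, dist x y]`) and the topological arc between any two points is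
unique. -/
def IsRTree (T : Type*) [MetricSpace T] : Prop :=
  (∀ x y : T, ∃ A : Set T, IsSegment A x y) ∧
  (∀ x y : T, ∀ A B : Set T, IsTopArc A x y → IsTopArc B x y → A = B)

/-- A subset `C` of an ℝ-tree is convex if it contains the segment between any two of
its points. -/
def RTreeConvex {T : Type*} [MetricSpace T] (C : Set T) : Prop :=
  ∀ x ∈ C, ∀ y ∈ C, ∀ A : Set T, IsSegment A x y → A ⊆ C

/-- The convex hull of a subset of an ℝ-tree: the intersection of all convex subsets
containing it. -/
def rtConvexHull {T : Type*} [MetricSpace T] (S : Set T) : Set T :=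
  ⋂₀ {C : Set T | RTreeConvex C ∧ S ⊆ C}

/-- `A` is an arc of length `ε` in `T`: the image of an isometric embedding of `[0, ε]`. -/
def IsArcOfLength {T : Type*} [MetricSpace T] (ε : ℝ) (A : Set T) : Prop :=
  ∃ f : ℝ → T,
    (∀ s ∈ Icc (0 : ℝ) ε, ∀ t ∈ Icc (0 : ℝ) ε, dist (f s) (f t) = |s - t|) ∧
    f '' Icc 0 ε = A

theorem exists_ne_dist_lt_of_infinite {ι X : Type*} [Infinite ι] [PseudoMetricSpace X]
    [CompactSpace X] (φ : ι → X) {δ : ℝ} (hδ : 0 < δ) :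
    ∃ i j, i ≠ j ∧ dist (φ i) (φ j) < δ := by
  obtain ⟨s, -, hs, hcover⟩ :=
    finite_cover_balls_of_compact (isCompact_univ (X := X)) (half_pos hδ)
  have : Finite s := hs
  have hcenter : ∀ i, ∃ c : s, φ i ∈ Metric.ball (c : X) (δ / 2) := fun i => by
    simpa using hcover (mem_univ (φ i))
  choose c hc using hcenter
  obtain ⟨i, j, hij, hcij⟩ := Finite.exists_ne_map_eq_of_infinite c
  refine ⟨i, j, hij, ?_⟩
  have hi := Metric.mem_ball.mp (hc i)
  have hj := Metric.mem_ball.mp (hc j)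
  rw [hcij] at hi
  linarith [dist_triangle_right (φ i) (φ j) (c j)]

section Arcs

variable {X T : Type*} [TopologicalSpace X] [MetricSpace T]

theorem exists_first_mem_of_continuousOn {g : ℝ → X} {p q : ℝ} {K : Set X} (hpq : p ≤ q)
    (hg : ContinuousOn g (Icc p q)) (hK : IsClosed K) (hq : g q ∈ K) :
    ∃ t ∈ Icc p q, g t ∈ K ∧ ∀ u ∈ Ico p t, g u ∉ K := by
  set S := Icc p q ∩ g ⁻¹' K
  have hSne : S.Nonempty := ⟨q, ⟨hpq, le_rfl⟩, hq⟩
  have hSbdd : BddBelow S := bddBelow_Icc.mono inter_subset_left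
  have hSinf : sInf S ∈ S :=
    (hg.preimage_isClosed_of_isClosed isClosed_Icc hK).csInf_mem hSne hSbdd
  refine ⟨sInf S, hSinf.1, hSinf.2, fun u hu huK => ?_⟩
  have : sInf S ≤ u := csInf_le hSbdd ⟨⟨hu.1, hu.2.le.trans hSinf.1.2⟩, huK⟩
  exact hu.2.not_ge this

theorem continuousOn_ite_le {g k : ℝ → X} {p q r : ℝ} (hg : ContinuousOn g (Icc p q))
    (hk : ContinuousOn k (Icc q r)) (hgk : g q = k q) (hpq : p ≤ q) (hqr : q ≤ r) :
    ContinuousOn (fun u => if u ≤ q then g u else k u) (Icc p r) := by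
  rw [← Icc_union_Icc_eq_Icc hpq hqr]
  refine ContinuousOn.union_of_isClosed ?_ ?_ isClosed_Icc isClosed_Icc
  · exact hg.congr fun u hu => if_pos hu.2
  · refine hk.congr fun u hu => ?_
    rcases hu.1.eq_or_lt with rfl | hqu
    · simp [hgk]
    · exact if_neg hqu.not_ge

theorem injOn_ite_le {α : Type*} {g k : ℝ → α} {p q r : ℝ} (hg : InjOn g (Icc p q))
    (hk : InjOn k (Icc q r))
    (hmeet : ∀ u ∈ Icc p q, ∀ v ∈ Icc q r, g u = k v → v = q) :
    InjOn (fun u => if u ≤ q then g u else k u) (Icc p r) := by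
  have cross : ∀ u ∈ Icc p r, ∀ v ∈ Icc p r, u ≤ q → q < v → g u ≠ k v :=
    fun u hu v hv huq hqv h => hqv.ne' (hmeet u ⟨hu.1, huq⟩ v ⟨hqv.le, hv.2⟩ h)
  intro u hu v hv huv
  simp only at huv
  split_ifs at huv with huq hvq hvq
  · exact hg ⟨hu.1, huq⟩ ⟨hv.1, hvq⟩ huv
  · exact absurd huv (cross u hu v hv huq (not_le.mp hvq))
  · exact absurd huv.symm (cross v hv u hu hvq (not_le.mp huq))
  · exact hk ⟨(not_le.mp huq).le, hu.2⟩ ⟨(not_le.mp hvq).le, hv.2⟩ huv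

theorem isTopArc_image_Icc {F : ℝ → T} {p q : ℝ} (hpq : p < q) (hF : ContinuousOn F (Icc p q))
    (hFi : InjOn F (Icc p q)) : IsTopArc (F '' Icc p q) (F p) (F q) := by
  set φ : ℝ → ℝ := fun u => (q - p) * u + p
  have hφ : φ '' Icc 0 1 = Icc p q := by
    simp [φ, image_affine_Icc' (sub_pos.mpr hpq)]
  refine ⟨F ∘ φ, hF.comp (by fun_prop) (hφ ▸ mapsTo_image φ _), ?_, by simp [φ], by simp [φ],
    by rw [image_comp, hφ]⟩
  refine hFi.comp (fun u _ v _ h => ?_) (hφ ▸ mapsTo_image φ _)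
  simpa [φ, (sub_pos.mpr hpq).ne'] using h

/-- If an arc from `a` ends on an arc ending at `b`, then follow the first one until it first
meets the second and continue along the second. -/
theorem exists_isTopArc_subset_union {g h : ℝ → T} {L₁ L₂ : ℝ} (hL₁ : 0 ≤ L₁)
    (hg : ContinuousOn g (Icc 0 L₁)) (hgi : InjOn g (Icc 0 L₁))
    (hh : ContinuousOn h (Icc 0 L₂)) (hhi : InjOn h (Icc 0 L₂))
    (hgh : g L₁ ∈ h '' Icc 0 L₂) (hne : g 0 ≠ h L₂) :
    ∃ A, IsTopArc A (g 0) (h L₂) ∧ A ⊆ g '' Icc 0 L₁ ∪ h '' Icc 0 L₂ := by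
  have hK : IsClosed (h '' Icc 0 L₂) := (isCompact_Icc.image_of_continuousOn hh).isClosed
  obtain ⟨t₀, ht₀, ht₀K, hfirst⟩ := exists_first_mem_of_continuousOn hL₁ hg hK hgh
  obtain ⟨s₀, hs₀, hhs₀⟩ := ht₀K
  set k : ℝ → T := fun u => h (u - t₀ + s₀)
  set ℓ := t₀ + (L₂ - s₀)
  have hk_mem : ∀ u ∈ Icc t₀ ℓ, u - t₀ + s₀ ∈ Icc 0 L₂ := fun u hu =>
    ⟨by linarith [hu.1, hs₀.1], by linarith [hu.2]⟩
  have hmaps : MapsTo (fun u => u - t₀ + s₀) (Icc t₀ ℓ) (Icc 0 L₂) := hk_mem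
  have hk : ContinuousOn k (Icc t₀ ℓ) := hh.comp (by fun_prop) hmaps
  have hki : InjOn k (Icc t₀ ℓ) :=
    hhi.comp (fun u _ v _ huv => by simpa using huv) hmaps
  have hgk : g t₀ = k t₀ := by simp [k, hhs₀]
  have hmeet : ∀ u ∈ Icc 0 t₀, ∀ v ∈ Icc t₀ ℓ, g u = k v → v = t₀ := by
    intro u hu v hv huv
    rcases hu.2.lt_or_eq with hut | rfl
    · exact absurd ⟨_, hk_mem v hv, huv.symm⟩ (hfirst u ⟨hu.1, hut⟩)
    · have := hhi hs₀ (hk_mem v hv) (hhs₀.trans huv)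
      linarith
  have hℓ : t₀ ≤ ℓ := by linarith [hs₀.2]
  set F : ℝ → T := fun u => if u ≤ t₀ then g u else k u
  have hF0 : F 0 = g 0 := if_pos ht₀.1
  have hFℓ : F ℓ = h L₂ := by
    rcases hℓ.eq_or_lt with heq | hlt
    · simp only [F, ← heq, le_refl, if_true, hgk, k]
      congr 1
      linarith
    · simp only [F, if_neg hlt.not_ge, k]
      congr 1
      ring
  have hℓpos : 0 < ℓ := by
    refine (ht₀.1.trans hℓ).lt_of_ne fun hℓ0 => hne ?_
    rw [← hF0, ← hFℓ, hℓ0]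
  refine ⟨F '' Icc 0 ℓ, hF0 ▸ hFℓ ▸ isTopArc_image_Icc hℓpos
    (continuousOn_ite_le (hg.mono (Icc_subset_Icc le_rfl ht₀.2)) hk hgk ht₀.1 hℓ)
    (injOn_ite_le (hgi.mono (Icc_subset_Icc le_rfl ht₀.2)) hki hmeet), ?_⟩
  rintro _ ⟨u, hu, rfl⟩
  by_cases hut : u ≤ t₀
  · exact Or.inl ⟨u, ⟨hu.1, hut.trans ht₀.2⟩, (if_pos hut).symm⟩
  · exact Or.inr ⟨_, hk_mem u ⟨(not_le.mp hut).le, hu.2⟩, (if_neg hut).symm⟩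

end Arcs

section Segments

variable {T : Type*} [MetricSpace T]

theorem continuousOn_of_dist_eq_abs_sub {f : ℝ → T} {S : Set ℝ}
    (hf : ∀ s ∈ S, ∀ t ∈ S, dist (f s) (f t) = |s - t|) : ContinuousOn f S :=
  (LipschitzOnWith.of_dist_le_mul (K := 1) fun s hs t ht => by
    simp [hf s hs t ht, Real.dist_eq]).continuousOn

theorem injOn_of_dist_eq_abs_sub {f : ℝ → T} {S : Set ℝ}
    (hf : ∀ s ∈ S, ∀ t ∈ S, dist (f s) (f t) = |s - t|) : InjOn f S := fun s hs t ht hst => by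
  have := hf s hs t ht
  rw [hst, dist_self, eq_comm, abs_eq_zero, sub_eq_zero] at this
  exact this

theorem dist_eq_of_dist_eq_abs_sub {f : ℝ → T} {L t : ℝ}
    (hf : ∀ s ∈ Icc (0 : ℝ) L, ∀ t ∈ Icc (0 : ℝ) L, dist (f s) (f t) = |s - t|)
    (ht : t ∈ Icc 0 L) : dist (f 0) (f t) = t ∧ dist (f t) (f L) = L - t := by
  have hL : 0 ≤ L := ht.1.trans ht.2
  rw [hf 0 ⟨le_rfl, hL⟩ t ht, hf t ht L ⟨hL, le_rfl⟩, abs_of_nonpos (by linarith [ht.1]),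
    abs_of_nonpos (by linarith [ht.2])]
  constructor <;> ring

theorem IsArcOfLength.exists_isSegment {ε : ℝ} {A : Set T} (hA : IsArcOfLength ε A)
    (hε : 0 ≤ ε) : ∃ a b, dist a b = ε ∧ IsSegment A a b := by
  obtain ⟨f, hf, himg⟩ := hA
  have hd : dist (f 0) (f ε) = ε := by
    simpa using (dist_eq_of_dist_eq_abs_sub hf ⟨hε, le_rfl⟩).1
  refine ⟨f 0, f ε, hd, f, ?_, rfl, by rw [hd], by rw [hd, himg]⟩
  rw [hd]
  exact hf

namespace IsSegment

variable {A : Set T} {a b : T}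

theorem isTopArc (hA : IsSegment A a b) (hab : a ≠ b) : IsTopArc A a b := by
  obtain ⟨f, hf, h0, hL, rfl⟩ := hA
  have := isTopArc_image_Icc (dist_pos.mpr hab) (continuousOn_of_dist_eq_abs_sub hf)
    (injOn_of_dist_eq_abs_sub hf)
  rwa [h0, hL] at this

theorem dist_add_dist_of_mem (hA : IsSegment A a b) {z : T} (hz : z ∈ A) :
    dist a z + dist z b = dist a b := by
  obtain ⟨f, hf, h0, hL, rfl⟩ := hA
  obtain ⟨t, ht, rfl⟩ := hz
  obtain ⟨h0t, htL⟩ := dist_eq_of_dist_eq_abs_sub hf ht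
  rw [h0] at h0t
  rw [hL] at htL
  linarith

theorem left_mem (hA : IsSegment A a b) : a ∈ A := by
  obtain ⟨f, -, h0, -, rfl⟩ := hA
  exact ⟨0, ⟨le_rfl, dist_nonneg⟩, h0⟩

theorem exists_midpoint (hA : IsSegment A a b) :
    ∃ m ∈ A, dist a m = dist a b / 2 ∧ dist m b = dist a b / 2 := by
  obtain ⟨f, hf, h0, hL, rfl⟩ := hA
  have hd := dist_nonneg (x := a) (y := b)
  have hmid : dist a b / 2 ∈ Icc 0 (dist a b) := ⟨by linarith, by linarith⟩
  obtain ⟨h0m, hmL⟩ := dist_eq_of_dist_eq_abs_sub hf hmid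
  rw [h0] at h0m
  rw [hL] at hmL
  exact ⟨_, mem_image_of_mem f hmid, h0m, by linarith⟩

end IsSegment

end Segments

namespace IsRTree

variable {T : Type*} [MetricSpace T] {A C D : Set T} {a b c : T}

theorem segment_subset_union (hT : IsRTree T) (hA : IsSegment A a b) (hC : IsSegment C a c)
    (hD : IsSegment D c b) : A ⊆ C ∪ D := by
  by_cases hab : a = b
  · intro z hz
    have hsum := hA.dist_add_dist_of_mem hz
    rw [← hab, dist_self] at hsum
    have hza : dist a z ≤ 0 := by linarith [dist_nonneg (x := z) (y := a)]
    rw [← dist_le_zero.mp hza]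
    exact Or.inl hC.left_mem
  obtain ⟨g, hg, hg0, hgL, rfl⟩ := hC
  obtain ⟨h, hh, hh0, hhL, rfl⟩ := hD
  have hcD : g (dist a c) ∈ h '' Icc 0 (dist c b) :=
    ⟨0, ⟨le_rfl, dist_nonneg⟩, hh0.trans hgL.symm⟩
  obtain ⟨A', hA', hA'sub⟩ := exists_isTopArc_subset_union dist_nonneg
    (continuousOn_of_dist_eq_abs_sub hg) (injOn_of_dist_eq_abs_sub hg)
    (continuousOn_of_dist_eq_abs_sub hh) (injOn_of_dist_eq_abs_sub hh) hcD (by rwa [hg0, hhL])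
  rw [hg0, hhL] at hA'
  rw [hT.2 a b A A' (hA.isTopArc hab) hA']
  exact hA'sub

theorem mem_of_dist_lt (hT : IsRTree T) {B : Set T} {a' b' m : T} (hA : IsSegment A a b)
    (hB : IsSegment B a' b') (hm : m ∈ A) (ha : dist a a' < dist a m)
    (hb : dist b' b < dist m b) : m ∈ B := by
  obtain ⟨C, hC⟩ := hT.1 a a'
  obtain ⟨D, hD⟩ := hT.1 a' b
  obtain ⟨D', hD'⟩ := hT.1 b' b
  have hmC : m ∉ C := fun hmC => by
    linarith [hC.dist_add_dist_of_mem hmC, dist_nonneg (x := m) (y := a')]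
  have hmD : m ∈ D := (hT.segment_subset_union hA hC hD hm).resolve_left hmC
  have hmD' : m ∉ D' := fun hmD' => by
    linarith [hD'.dist_add_dist_of_mem hmD', dist_nonneg (x := b') (y := m)]
  exact (hT.segment_subset_union hD hB hD' hmD).resolve_right hmD'

end IsRTree

/-- In a compact ℝ-tree, any collection of pairwise disjoint arcs of a
fixed length `ε > 0` is finite. -/
theorem finite_of_pairwise_disjoint_arcs {T : Type*} [MetricSpace T] [CompactSpace T]
    (hT : IsRTree T) (ε : ℝ) (hε : 0 < ε) (E : Set (Set T))
    (hdisj : E.Pairwise Disjoint) (harc : ∀ A ∈ E, IsArcOfLength ε A) :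
    E.Finite := by
  by_contra hinf
  have : Infinite E := infinite_coe_iff.mpr hinf
  choose a b hab hseg using fun A : E => (harc A A.2).exists_isSegment hε.le
  obtain ⟨A, B, hAB, hclose⟩ :=
    exists_ne_dist_lt_of_infinite (fun A : E => (a A, b A)) (half_pos hε)
  rw [Prod.dist_eq, max_lt_iff] at hclose
  obtain ⟨m, hmA, ham, hmb⟩ := (hseg A).exists_midpoint
  have hmB : m ∈ (B : Set T) := hT.mem_of_dist_lt (hseg A) (hseg B) hmA
    (by rw [ham, hab]; exact hclose.1) (by rw [hmb, hab, dist_comm]; exact hclose.2)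
  exact disjoint_left.mp (hdisj A.2 B.2 (Subtype.coe_injective.ne hAB)) hmA hmB
end

section
/- Let T be an ℝ-tree and let E be an infinite set of pairwise disjoint nonempty closed convex subsets (subtrees) of T. Then there exists a sequence (T_n)_{n ∈ ℕ} of pairwise distinct elements of E with the property that, for every n, the set T_{n+1} does not intersect the convex hull of the union T_1 ∪ T_2 ∪ ⋯ ∪ T_n. -/
open Set

/-!
For a base point `p` and points `qᵢ ∈ Dᵢ`, the union of the sets `Dᵢ ∪ [p, qᵢ]`, `i ≤ n`, is
star-shaped about `p`, hence convex by the tripod lemma `[x, y] ⊆ [x, p] ∪ [p, y]`. So it suffices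
to find members `D₀, D₁, …` of `E`, points `qᵢ ∈ Dᵢ` and `p` with `Dₙ` disjoint from `[p, qᵢ]`
for `i < n`. If some segment meets infinitely many members, take points of them on it, pass to a
subsequence monotone along the segment, and let `p` be the endpoint they move away from: if `Dₙ`
met `[p, qᵢ]`, it would contain `qᵢ` by convexity. Otherwise every segment meets only finitely
many members, and the `Dₙ` can be chosen greedily.
-/

def IsometricOn {T : Type*} [MetricSpace T] (f : ℝ → T) (s : Set ℝ) : Prop :=
  ∀ a ∈ s, ∀ b ∈ s, dist (f a) (f b) = |a - b|

section Arcs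

variable {T : Type*} [MetricSpace T]

theorem IsometricOn.continuousOn {f : ℝ → T} {s : Set ℝ} (hf : IsometricOn f s) :
    ContinuousOn f s :=
  (LipschitzOnWith.of_dist_le_mul (K := 1) fun a ha b hb => by
    rw [hf a ha b hb, NNReal.coe_one, one_mul, Real.dist_eq]).continuousOn

theorem IsometricOn.injOn {f : ℝ → T} {s : Set ℝ} (hf : IsometricOn f s) : InjOn f s :=
  fun a ha b hb hab => by
    have h := hf a ha b hb
    rw [hab, dist_self, eq_comm, abs_eq_zero, sub_eq_zero] at h
    exact h

theorem IsometricOn.comp_const_sub {f : ℝ → T} {L : ℝ} (hf : IsometricOn f (Icc 0 L)) :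
    IsometricOn (fun t => f (L - t)) (Icc 0 L) := by
  intro a ha b hb
  rw [hf _ ⟨by linarith [ha.2], by linarith [ha.1]⟩ _ ⟨by linarith [hb.2], by linarith [hb.1]⟩,
    abs_sub_comm]
  ring_nf

theorem isTopArc_image_Icc_s1 {f : ℝ → T} {a b : ℝ} (hab : a < b) (hc : ContinuousOn f (Icc a b))
    (hi : InjOn f (Icc a b)) : IsTopArc (f '' Icc a b) (f a) (f b) := by
  set σ : ℝ → ℝ := fun t => (b - a) * t + a
  have hσ : σ '' Icc 0 1 = Icc a b := by
    rw [image_affine_Icc' (sub_pos.2 hab)]; congr 1 <;> ring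
  refine ⟨f ∘ σ, hc.comp (by fun_prop) (hσ ▸ mapsTo_image σ _), hi.comp ?_ (hσ ▸ mapsTo_image σ _),
    by simp [σ], by simp [σ], by rw [image_comp, hσ]⟩
  exact fun s _ t _ hst => mul_left_cancel₀ (sub_pos.2 hab).ne' (add_right_cancel hst)

theorem IsTopArc.ne {A : Set T} {x y : T} (h : IsTopArc A x y) : x ≠ y := by
  obtain ⟨f, -, hi, rfl, rfl, -⟩ := h
  exact fun h01 => zero_ne_one (hi ⟨le_rfl, zero_le_one⟩ ⟨zero_le_one, le_rfl⟩ h01)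

theorem injOn_Icc_of_injOn_of_inter_subset {X : Type*} {f : ℝ → X} {a b c : ℝ} (hac : a ≤ c)
    (hcb : c ≤ b) (h₁ : InjOn f (Icc a c)) (h₂ : InjOn f (Icc c b))
    (h : f '' Icc a c ∩ f '' Icc c b ⊆ {f c}) : InjOn f (Icc a b) := by
  have hmixed : ∀ s ∈ Icc a c, ∀ t ∈ Icc c b, f s = f t → s = t := by
    intro s hs t ht hst
    have hc : f t = f c := h ⟨hst ▸ mem_image_of_mem f hs, mem_image_of_mem f ht⟩
    rw [h₁ hs ⟨hac, le_rfl⟩ (hst.trans hc), h₂ ht ⟨le_rfl, hcb⟩ hc]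
  rw [← Icc_union_Icc_eq_Icc hac hcb]
  rintro s (hs | hs) t (ht | ht) hst
  · exact h₁ hs ht hst
  · exact hmixed s hs t ht hst
  · exact (hmixed t ht s hs hst.symm).symm
  · exact h₂ hs ht hst

theorem IsTopArc.union {A B : Set T} {x y z : T} (hA : IsTopArc A x z) (hB : IsTopArc B z y)
    (hAB : A ∩ B ⊆ {z}) : IsTopArc (A ∪ B) x y := by
  obtain ⟨f, hfc, hfi, rfl, hf1, rfl⟩ := hA
  obtain ⟨g, hgc, hgi, hg0, rfl, rfl⟩ := hB
  set F : ℝ → T := fun t => if t ≤ 1 then f t else g (t - 1)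
  have hFf : EqOn F f (Icc 0 1) := fun t ht => if_pos ht.2
  have hFg : EqOn F (g ∘ (· - 1)) (Icc 1 2) := by
    intro t ht
    rcases ht.1.eq_or_lt with rfl | h
    · simp [F, hf1, hg0]
    · exact if_neg (not_le.2 h)
  have hshift : MapsTo (· - 1) (Icc (1 : ℝ) 2) (Icc 0 1) := fun t ht =>
    ⟨by linarith [ht.1], by linarith [ht.2]⟩
  have himg₂ : F '' Icc 1 2 = g '' Icc 0 1 := by
    rw [hFg.image_eq, image_comp, image_sub_const_Icc]; norm_num
  have hsplit : Icc (0 : ℝ) 2 = Icc 0 1 ∪ Icc 1 2 :=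
    (Icc_union_Icc_eq_Icc zero_le_one one_le_two).symm
  have hc : ContinuousOn F (Icc 0 2) := by
    rw [hsplit]
    exact (hfc.congr hFf).union_of_isClosed ((hgc.comp (by fun_prop) hshift).congr hFg)
      isClosed_Icc isClosed_Icc
  have hi : InjOn F (Icc 0 2) := by
    refine injOn_Icc_of_injOn_of_inter_subset zero_le_one one_le_two (hfi.congr hFf.symm)
      ((hgi.comp sub_left_injective.injOn hshift).congr hFg.symm) ?_
    rw [hFf.image_eq, himg₂, hFf ⟨zero_le_one, le_rfl⟩, hf1]
    exact hAB
  have h := isTopArc_image_Icc_s1 two_pos hc hi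
  rw [hsplit, image_union, hFf.image_eq, himg₂, hFf ⟨le_rfl, zero_le_one⟩,
    hFg ⟨one_le_two, le_rfl⟩] at h
  norm_num at h
  exact h

end Arcs

theorem exists_first_mem_of_continuousOn_s1 {X : Type*} [TopologicalSpace X] {f : ℝ → X}
    {a b : ℝ} {B : Set X} (hf : ContinuousOn f (Icc a b)) (hB : IsClosed B) (hab : a ≤ b)
    (hb : f b ∈ B) : ∃ t ∈ Icc a b, f t ∈ B ∧ ∀ u ∈ Ico a t, f u ∉ B := by
  set M := Icc a b ∩ f ⁻¹' B
  have hM : BddBelow M := bddBelow_Icc.mono inter_subset_left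
  have hmin : sInf M ∈ M :=
    (hf.preimage_isClosed_of_isClosed isClosed_Icc hB).csInf_mem ⟨b, ⟨hab, le_rfl⟩, hb⟩ hM
  exact ⟨sInf M, hmin.1, hmin.2, fun u hu hfu =>
    (csInf_le hM ⟨⟨hu.1, hu.2.le.trans hmin.1.2⟩, hfu⟩).not_gt hu.2⟩

section Segments

variable {T : Type*} [MetricSpace T]

theorem IsSegment.isTopArc_s1 {A : Set T} {x y : T} (h : IsSegment A x y) (hxy : x ≠ y) :
    IsTopArc A x y := by
  obtain ⟨f, hf, h0, h1, rfl⟩ := h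
  have hf : IsometricOn f _ := hf
  simpa only [h0, h1] using isTopArc_image_Icc_s1 (dist_pos.2 hxy) hf.continuousOn hf.injOn

theorem IsSegment.eq_singleton {A : Set T} {x : T} (h : IsSegment A x x) : A = {x} := by
  obtain ⟨f, -, h0, -, rfl⟩ := h
  rw [dist_self, Icc_self, image_singleton, h0]

theorem IsometricOn.isSegment_image_Icc {f : ℝ → T} {s : Set ℝ} (hf : IsometricOn f s)
    {a b : ℝ} (hab : a ≤ b) (hsub : Icc a b ⊆ s) : IsSegment (f '' Icc a b) (f a) (f b) := by
  have hd : dist (f a) (f b) = b - a := by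
    rw [hf a (hsub ⟨le_rfl, hab⟩) b (hsub ⟨hab, le_rfl⟩), abs_sub_comm, abs_of_nonneg (by linarith)]
  have hmem : ∀ u ∈ Icc 0 (b - a), a + u ∈ s := fun u hu =>
    hsub ⟨by linarith [hu.1], by linarith [hu.2]⟩
  refine ⟨fun u => f (a + u), ?_, by simp, by simp [hd], ?_⟩
  · intro u hu v hv
    rw [hd] at hu hv
    rw [hf _ (hmem u hu) _ (hmem v hv)]
    ring_nf
  · rw [hd, ← image_image f (a + ·), image_const_add_Icc]
    ring_nf

theorem IsSegment.symm {A : Set T} {x y : T} (h : IsSegment A x y) : IsSegment A y x := by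
  obtain ⟨f, hf, h0, h1, rfl⟩ := h
  have hf : IsometricOn f _ := hf
  have h := hf.comp_const_sub.isSegment_image_Icc dist_nonneg subset_rfl
  rwa [← image_image f (dist x y - ·), image_const_sub_Icc, sub_zero, sub_self, h0, h1] at h

theorem IsSegment.unique {A B : Set T} {x y : T} (hT : IsRTree T) (hA : IsSegment A x y)
    (hB : IsSegment B x y) : A = B := by
  rcases eq_or_ne x y with rfl | hxy
  · rw [hA.eq_singleton, hB.eq_singleton]
  · exact hT.2 x y A B (hA.isTopArc_s1 hxy) (hB.isTopArc_s1 hxy)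

namespace IsRTree

variable (hT : IsRTree T)

noncomputable def seg (x y : T) : Set T := (hT.1 x y).choose

theorem isSegment_seg (x y : T) : IsSegment (hT.seg x y) x y := (hT.1 x y).choose_spec

theorem _root_.IsSegment.eq_seg {A : Set T} {x y : T} (h : IsSegment A x y) : A = hT.seg x y :=
  h.unique hT (hT.isSegment_seg x y)

theorem seg_comm (x y : T) : hT.seg x y = hT.seg y x :=
  (hT.isSegment_seg x y).symm.eq_seg hT

theorem seg_self (x : T) : hT.seg x x = {x} := (hT.isSegment_seg x x).eq_singleton

theorem seg_eq_image_Icc {f : ℝ → T} {s : Set ℝ} (hf : IsometricOn f s) {a b : ℝ} (hab : a ≤ b)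
    (hsub : Icc a b ⊆ s) : hT.seg (f a) (f b) = f '' Icc a b :=
  ((hf.isSegment_image_Icc hab hsub).eq_seg hT).symm

theorem left_mem_seg (x y : T) : x ∈ hT.seg x y := by
  obtain ⟨f, -, h0, -, hA⟩ := hT.isSegment_seg x y
  exact hA ▸ h0 ▸ mem_image_of_mem f ⟨le_rfl, dist_nonneg⟩

theorem right_mem_seg (x y : T) : y ∈ hT.seg x y := hT.seg_comm y x ▸ hT.left_mem_seg y x

theorem isClosed_seg (x y : T) : IsClosed (hT.seg x y) := by
  obtain ⟨f, hf, -, -, hA⟩ := hT.isSegment_seg x y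
  exact hA ▸ (isCompact_Icc.image_of_continuousOn (IsometricOn.continuousOn hf)).isClosed

theorem seg_subset_seg_left {x y z : T} (hz : z ∈ hT.seg x y) : hT.seg x z ⊆ hT.seg x y := by
  obtain ⟨f, hf, h0, -, hA⟩ := hT.isSegment_seg x y
  rw [← hA] at hz ⊢
  obtain ⟨t, ht, rfl⟩ := hz
  have h := hT.seg_eq_image_Icc hf ht.1 (Icc_subset_Icc le_rfl ht.2)
  rw [h0] at h
  exact h ▸ image_mono (Icc_subset_Icc le_rfl ht.2)

theorem seg_subset_seg_right {x y z : T} (hz : z ∈ hT.seg x y) : hT.seg z y ⊆ hT.seg x y := by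
  rw [hT.seg_comm z, hT.seg_comm x]
  exact hT.seg_subset_seg_left (hT.seg_comm x y ▸ hz)

theorem mem_seg_of_mem_seg {x y z w : T} (hz : z ∈ hT.seg x y) (hw : w ∈ hT.seg x z) :
    z ∈ hT.seg w y := by
  obtain ⟨f, hf, h0, h1, hA⟩ := hT.isSegment_seg x y
  rw [← hA] at hz
  obtain ⟨t, ht, rfl⟩ := hz
  rw [← h0, hT.seg_eq_image_Icc hf ht.1 (Icc_subset_Icc le_rfl ht.2)] at hw
  obtain ⟨s, hs, rfl⟩ := hw
  rw [← h1, hT.seg_eq_image_Icc hf (hs.2.trans ht.2) (Icc_subset_Icc hs.1 le_rfl)]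
  exact mem_image_of_mem f ⟨hs.2, ht.2⟩

theorem seg_eq_union_of_inter_subset {x y z : T} (h : hT.seg x z ∩ hT.seg z y ⊆ {z}) :
    hT.seg x y = hT.seg x z ∪ hT.seg z y := by
  rcases eq_or_ne x z with rfl | hxz
  · rw [hT.seg_self, singleton_union, insert_eq_of_mem (hT.left_mem_seg x y)]
  rcases eq_or_ne z y with rfl | hzy
  · rw [hT.seg_self, union_singleton, insert_eq_of_mem (hT.right_mem_seg x z)]
  have harc := ((hT.isSegment_seg x z).isTopArc_s1 hxz).union ((hT.isSegment_seg z y).isTopArc_s1 hzy) h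
  exact hT.2 x y _ _ ((hT.isSegment_seg x y).isTopArc_s1 harc.ne) harc

/-- `[x, y]` is the concatenation of `[x, z]` and `[z, y]`, where `z` is the first point of
`[x, p]` on `[p, y]`. -/
theorem seg_subset_union (x p y : T) : hT.seg x y ⊆ hT.seg x p ∪ hT.seg p y := by
  obtain ⟨g, hg, hg0, hgp, hA⟩ := hT.isSegment_seg x p
  have hg : IsometricOn g _ := hg
  obtain ⟨t₀, ht₀, hz, hfirst⟩ := exists_first_mem_of_continuousOn_s1 hg.continuousOn
    (hT.isClosed_seg p y) dist_nonneg (by rw [hgp]; exact hT.left_mem_seg p y)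
  have hxz : hT.seg x (g t₀) = g '' Icc 0 t₀ :=
    hg0 ▸ hT.seg_eq_image_Icc hg ht₀.1 (Icc_subset_Icc le_rfl ht₀.2)
  have hjunction : hT.seg x (g t₀) ∩ hT.seg (g t₀) y ⊆ {g t₀} := by
    rintro _ ⟨hw, hwy⟩
    rw [hxz] at hw
    obtain ⟨u, hu, rfl⟩ := hw
    have hu' : ¬u < t₀ := fun hlt => hfirst u ⟨hu.1, hlt⟩ (hT.seg_subset_seg_right hz hwy)
    rw [le_antisymm hu.2 (not_lt.1 hu'), mem_singleton_iff]
  rw [hT.seg_eq_union_of_inter_subset hjunction]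
  exact union_subset_union (hT.seg_subset_seg_left (hA ▸ mem_image_of_mem g ht₀))
    (hT.seg_subset_seg_right hz)

end IsRTree

end Segments

section

variable {T : Type*} [MetricSpace T]

theorem RTreeConvex.seg_subset {C : Set T} (hC : RTreeConvex C) (hT : IsRTree T) {x y : T}
    (hx : x ∈ C) (hy : y ∈ C) : hT.seg x y ⊆ C :=
  hC x hx y hy _ (hT.isSegment_seg x y)

theorem rtConvexHull_min {S K : Set T} (hSK : S ⊆ K) (hK : RTreeConvex K) : rtConvexHull S ⊆ K :=
  sInter_subset_of_mem ⟨hK, hSK⟩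

namespace IsRTree

variable (hT : IsRTree T)

theorem rTreeConvex_of_star {K : Set T} {p : T} (h : ∀ z ∈ K, hT.seg p z ⊆ K) :
    RTreeConvex K := by
  intro u hu v hv A hA
  rw [hA.eq_seg hT]
  exact (hT.seg_subset_union u p v).trans (union_subset (hT.seg_comm u p ▸ h u hu) (h v hv))

theorem seg_subset_union_seg_of_mem {C : Set T} (hC : RTreeConvex C) {p q z : T} (hq : q ∈ C)
    (hz : z ∈ C ∪ hT.seg p q) : hT.seg p z ⊆ C ∪ hT.seg p q := by
  rcases hz with hz | hz
  · exact fun w hw => (hT.seg_subset_union p q z hw).elim Or.inr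
      fun h => Or.inl (hC.seg_subset hT hq hz h)
  · exact (hT.seg_subset_seg_left hz).trans subset_union_right

theorem disjoint_rtConvexHull_biUnion {ι : Type*} {s : Set ι} {D : ι → Set T} {q : ι → T}
    (p : T) (hD : ∀ i ∈ s, RTreeConvex (D i)) (hq : ∀ i ∈ s, q i ∈ D i) {Y : Set T}
    (hY : ∀ i ∈ s, Disjoint Y (D i ∪ hT.seg p (q i))) :
    Disjoint Y (rtConvexHull (⋃ i ∈ s, D i)) := by
  have hK : RTreeConvex (⋃ i ∈ s, (D i ∪ hT.seg p (q i))) := by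
    refine hT.rTreeConvex_of_star (p := p) fun z hz => ?_
    obtain ⟨i, hi, hz⟩ := mem_iUnion₂.1 hz
    exact (hT.seg_subset_union_seg_of_mem (hD i hi) (hq i hi) hz).trans
      (subset_biUnion_of_mem (u := fun i => D i ∪ hT.seg p (q i)) hi)
  exact (disjoint_iUnion₂_right.2 hY).mono_right
    (rtConvexHull_min (iUnion₂_mono fun i _ => subset_union_left) hK)

theorem exists_strictMono_mem_seg {x y : T} {r : ℕ → T} (hr : ∀ n, r n ∈ hT.seg x y) :
    ∃ p, ∃ g : ℕ → ℕ, StrictMono g ∧ ∀ i n, i < n → r (g i) ∈ hT.seg p (r (g n)) := by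
  obtain ⟨φ, hφ, hφ0, hφL, hA⟩ := hT.isSegment_seg x y
  have hφ : IsometricOn φ _ := hφ
  set L := dist x y
  choose v hvL hvr using fun n => hA ▸ hr n
  obtain ⟨g, hmono | hanti⟩ := exists_increasing_or_nonincreasing_subseq (· ≤ ·) v
  · refine ⟨x, g, g.strictMono, fun i n hin => ?_⟩
    rw [← hvr, ← hvr, ← hφ0, hT.seg_eq_image_Icc hφ (hvL _).1 (Icc_subset_Icc le_rfl (hvL _).2)]
    exact mem_image_of_mem φ ⟨(hvL _).1, hmono i n hin⟩
  · refine ⟨y, g, g.strictMono, fun i n hin => ?_⟩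
    rw [← hvr, ← hvr, hT.seg_comm, ← hφL,
      hT.seg_eq_image_Icc hφ (hvL _).2 (Icc_subset_Icc (hvL _).1 le_rfl)]
    exact mem_image_of_mem φ ⟨(not_le.1 (hanti i n hin)).le, (hvL _).2⟩

theorem disjoint_seg_of_mem_seg {C C' : Set T} (hC : RTreeConvex C) (hCC' : Disjoint C C')
    {p q r : T} (hq : q ∈ C') (hr : r ∈ C) (hqr : q ∈ hT.seg p r) : Disjoint C (hT.seg p q) :=
  Set.disjoint_left.2 fun _ hzC hz =>
    Set.disjoint_left.1 hCC' (hC.seg_subset hT hzC hr (hT.mem_seg_of_mem_seg hqr hz)) hq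

theorem exists_seq_of_infinite_meeting_seg {E : Set (Set T)} (hconv : ∀ C ∈ E, RTreeConvex C)
    (hdisj : E.Pairwise Disjoint) {x y : T}
    (hinf : {C ∈ E | (C ∩ hT.seg x y).Nonempty}.Infinite) :
    ∃ (p : T) (D : ℕ → Set T) (q : ℕ → T), (∀ n, D n ∈ E) ∧ (∀ n, q n ∈ D n) ∧
      ∀ i n, i < n → Disjoint (D n) (hT.seg p (q i)) := by
  set C : ℕ ↪ {C ∈ E | (C ∩ hT.seg x y).Nonempty} := hinf.natEmbedding _
  choose r hrC hrseg using fun n => (C n).2.2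
  obtain ⟨p, g, hg, hpg⟩ := hT.exists_strictMono_mem_seg hrseg
  refine ⟨p, fun n => C (g n), r ∘ g, fun n => (C _).2.1, fun n => hrC _, fun i n hin => ?_⟩
  have hne : (C (g n) : Set T) ≠ C (g i) := fun h => (hg hin).ne' (C.injective (Subtype.ext h))
  exact hT.disjoint_seg_of_mem_seg (hconv _ (C _).2.1) (hdisj (C _).2.1 (C _).2.1 hne) (hrC _)
    (hrC _) (hpg i n hin)

theorem exists_seq_of_finite_meeting_seg {E : Set (Set T)} (hinf : E.Infinite)
    (hne : ∀ C ∈ E, C.Nonempty) (hfin : ∀ x y : T, {C ∈ E | (C ∩ hT.seg x y).Nonempty}.Finite) :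
    ∃ (p : T) (D : ℕ → Set T) (q : ℕ → T), (∀ n, D n ∈ E) ∧ (∀ n, q n ∈ D n) ∧
      ∀ i n, i < n → Disjoint (D n) (hT.seg p (q i)) := by
  obtain ⟨p, -⟩ := hne _ hinf.nonempty.some_mem
  have : Nonempty T := ⟨p⟩
  choose! q hq using hne
  obtain ⟨D, hDE, hD⟩ := exists_seq_of_forall_finset_exists (· ∈ E)
    (fun X Y => Disjoint Y (hT.seg p (q X))) fun s _ => by
      obtain ⟨Y, hYE, hY⟩ := (hinf.sdiff (s.finite_toSet.biUnion fun X _ => hfin p (q X))).nonempty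
      exact ⟨Y, hYE, fun X hX => disjoint_iff_inter_eq_empty.2
        (not_nonempty_iff_eq_empty.1 fun h => hY (mem_biUnion hX ⟨hYE, h⟩))⟩
  exact ⟨p, D, q ∘ D, hDE, fun n => hq _ (hDE n), hD⟩

theorem exists_seq_disjoint_seg {E : Set (Set T)} (hinf : E.Infinite)
    (hne : ∀ C ∈ E, C.Nonempty) (hconv : ∀ C ∈ E, RTreeConvex C) (hdisj : E.Pairwise Disjoint) :
    ∃ (p : T) (D : ℕ → Set T) (q : ℕ → T), (∀ n, D n ∈ E) ∧ (∀ n, q n ∈ D n) ∧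
      ∀ i n, i < n → Disjoint (D n) (hT.seg p (q i)) := by
  by_cases h : ∃ x y, {C ∈ E | (C ∩ hT.seg x y).Nonempty}.Infinite
  · obtain ⟨x, y, h⟩ := h
    exact hT.exists_seq_of_infinite_meeting_seg hconv hdisj h
  · simp only [not_exists, not_infinite] at h
    exact hT.exists_seq_of_finite_meeting_seg hinf hne h

end IsRTree

end

/-- Given an infinite set of pairwise disjoint nonempty closed convex
subsets of an ℝ-tree, one can extract a sequence of pairwise distinct members such that
each term avoids the convex hull of the union of the previous ones. -/
theorem exists_seq_avoiding_convexHull {T : Type*} [MetricSpace T] (hT : IsRTree T)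
    (E : Set (Set T)) (hinf : E.Infinite)
    (hmem : ∀ C ∈ E, C.Nonempty ∧ IsClosed C ∧ RTreeConvex C)
    (hdisj : E.Pairwise Disjoint) :
    ∃ f : ℕ → Set T, (∀ n, f n ∈ E) ∧ Function.Injective f ∧
      ∀ n : ℕ, Disjoint (f (n + 1)) (rtConvexHull (⋃ i ∈ Finset.range (n + 1), f i)) := by
  obtain ⟨p, D, q, hDE, hqD, hDseg⟩ := hT.exists_seq_disjoint_seg hinf (fun C hC => (hmem C hC).1)
    (fun C hC => (hmem C hC).2.2) hdisj
  have hne : ∀ i n, i < n → D n ≠ D i := fun i n hin h =>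
    Set.disjoint_left.1 (hDseg i n hin) (h ▸ hqD i) (hT.right_mem_seg p (q i))
  refine ⟨D, hDE, .of_lt_imp_ne fun i n hin => (hne i n hin).symm, fun n => ?_⟩
  rw [← Finset.set_biUnion_coe]
  refine hT.disjoint_rtConvexHull_biUnion p (fun i _ => (hmem _ (hDE i)).2.2) (fun i _ => hqD i)
    fun i hi => ?_
  have hin : i < n + 1 := Finset.mem_range.1 hi
  exact disjoint_union_right.2 ⟨hdisj (hDE _) (hDE _) (hne i _ hin), hDseg i _ hin⟩
end

section
/- Let K be a compact ℝ-tree and let (D_i)_{i ∈ I} be a finite family of nonempty closed convex subsets of K (for instance, the domains of the partial isometries of a system of partial isometries on K and of their inverses). Let K^{≥3} denote the set of points x ∈ K that belong to D_i for at least three distinct indices i ∈ I. If K^{≥3} contains no nontrivial arc (i.e., there is no ε > 0 and no isometric embedding of [0,ε] into K whose image is contained in K^{≥3}), then K^{≥3} is a finite set of points. -/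
open Set

/-- Let `K` be a compact ℝ-tree and `D i`, `i ∈ I`, a finite family of
nonempty closed convex subsets. If the set `K^{≥3}` of points lying in at least three of
the `D i` contains no nontrivial arc, then `K^{≥3}` is finite. -/
theorem finite_of_no_arc_in_triple_intersections {K : Type*} [MetricSpace K]
    [CompactSpace K] (hK : IsRTree K) {I : Type*} [Finite I] (D : I → Set K)
    (hne : ∀ i, (D i).Nonempty) (hcl : ∀ i, IsClosed (D i))
    (hconv : ∀ i, RTreeConvex (D i))
    (hnoarc : ¬ ∃ ε : ℝ, 0 < ε ∧ ∃ f : ℝ → K,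
      (∀ s ∈ Icc (0 : ℝ) ε, ∀ t ∈ Icc (0 : ℝ) ε, dist (f s) (f t) = |s - t|) ∧
      f '' Icc 0 ε ⊆ {x : K | 3 ≤ {i : I | x ∈ D i}.ncard}) :
    {x : K | 3 ≤ {i : I | x ∈ D i}.ncard}.Finite := by
  classical
  haveI := Fintype.ofFinite I
  have hcov : {x : K | 3 ≤ {i : I | x ∈ D i}.ncard} ⊆
      ⋃ S ∈ {S : Finset I | S.card = 3}, ⋂ i ∈ S, D i := by
    intro x hx
    have hfin : {i : I | x ∈ D i}.Finite := Set.toFinite _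
    have hcard : 3 ≤ hfin.toFinset.card := by
      exact le_trans hx (le_of_eq (Set.ncard_eq_toFinset_card _ hfin))
    obtain ⟨S, hS, hScard⟩ := Finset.exists_subset_card_eq hcard
    refine Set.mem_biUnion (show S ∈ {S : Finset I | S.card = 3} from hScard) ?_
    simp only [Set.mem_iInter]
    intro i hi
    have := hS hi
    rw [Set.Finite.mem_toFinset] at this
    exact this
  refine Set.Finite.subset (Set.Finite.biUnion (Set.toFinite _) ?_) hcov
  intro S hScard
  have hsub : (⋂ i ∈ S, D i).Subsingleton := by
    intro x hx y hy
    by_contra hxy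
    obtain ⟨A, f, hiso, hf0, hfd, hfA⟩ := hK.1 x y
    apply hnoarc
    refine ⟨dist x y, dist_pos.2 hxy, f, hiso, ?_⟩
    rw [hfA]
    have hAi : ∀ i ∈ S, A ⊆ D i := by
      intro i hi
      exact hconv i x (Set.mem_iInter₂.1 hx i hi) y (Set.mem_iInter₂.1 hy i hi) A
        ⟨f, hiso, hf0, hfd, hfA⟩
    intro z hz
    have hSsub : (S : Set I) ⊆ {i : I | z ∈ D i} := fun i hi => hAi i hi hz
    have : 3 ≤ (S : Set I).ncard := by
      rw [Set.ncard_coe_finset, hScard]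
    exact le_trans this (Set.ncard_le_ncard hSsub (Set.toFinite _))
  exact hsub.finite
end
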